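/- If f is a symmetric unimodal probability density with mode at zero and σ² > 0, then the normal means posterior mean operator S(y) = E[b | y] is an odd function of y that satisfies S(y) ≤ y for y > 0. -/

import Mathlib

open MeasureTheory Real

/-- Gaussian density with mean `μ` and variance `v`. -/
noncomputable def gauss (μ v x : ℝ) : ℝ :=
  (Real.sqrt (2 * Real.pi * v))⁻¹ * Real.exp (-(x - μ)^2 / (2 * v))

/-- Normal means posterior mean operator for prior density `f` and noise
variance `σ2`. -/
noncomputable def postMean (f : ℝ → ℝ) (σ2 y : ℝ) : ℝ :=
  (∫ b : ℝ, b * (gauss b σ2 y * f b)) / (∫ b : ℝ, gauss b σ2 y * f b)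

/-!
Oddness is the substitution `b ↦ -b`, under which both the prior and the Gaussian kernel `φ`
are invariant. The shrinkage bound amounts to `∫ (y - b) φ(y - b) f(b) db ≥ 0`. Pairing `b`
with its mirror image `2y - b` about `y`, which leaves the kernel unchanged, turns the integrand
into `(y - b) (f b - f (2y - b)) φ(y - b)`. For `y ≥ 0`, whichever of `b`, `2y - b` lies on the
side of `0` is the smaller in absolute value, so symmetry and unimodality make this nonnegative.
-/

section Gauss

variable {v : ℝ}

lemma gauss_pos (hv : 0 < v) (μ x : ℝ) : 0 < gauss μ v x := by
  unfold gauss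
  positivity

lemma gauss_nonneg (μ v x : ℝ) : 0 ≤ gauss μ v x := by
  unfold gauss
  positivity

lemma gauss_le (hv : 0 ≤ v) (μ x : ℝ) : gauss μ v x ≤ (√(2 * π * v))⁻¹ := by
  refine mul_le_of_le_one_right (by positivity) (exp_le_one_iff.mpr ?_)
  exact div_nonpos_of_nonpos_of_nonneg (by nlinarith [sq_nonneg (x - μ)]) (by positivity)

lemma continuous_gauss_mean (v x : ℝ) : Continuous fun μ => gauss μ v x := by
  unfold gauss
  fun_prop

lemma gauss_neg_neg (μ v x : ℝ) : gauss (-μ) v (-x) = gauss μ v x := by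
  unfold gauss
  ring_nf

lemma gauss_two_mul_sub (μ v x : ℝ) : gauss (2 * x - μ) v x = gauss μ v x := by
  unfold gauss
  ring_nf

lemma abs_mul_exp_neg_sq_div_le (hv : 0 < v) (t : ℝ) :
    |t| * exp (-t ^ 2 / (2 * v)) ≤ √(2 * v) := by
  set s := √(2 * v)
  have hs : 0 < s := by positivity
  have hs2 : s ^ 2 = 2 * v := sq_sqrt (by positivity)
  have hexp : 1 + (|t| / s) ^ 2 ≤ exp (t ^ 2 / (2 * v)) := by
    rw [div_pow, sq_abs, hs2]
    linarith [add_one_le_exp (t ^ 2 / (2 * v))]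
  have hamgm : |t| / s ≤ 1 + (|t| / s) ^ 2 := by nlinarith [sq_nonneg (|t| / s - 1)]
  calc |t| * exp (-t ^ 2 / (2 * v)) = s * (|t| / s) * exp (-(t ^ 2 / (2 * v))) := by
        field_simp
    _ ≤ s * exp (t ^ 2 / (2 * v)) * exp (-(t ^ 2 / (2 * v))) := by gcongr; linarith
    _ = s := by rw [mul_assoc, ← exp_add, add_neg_cancel, exp_zero, mul_one]

lemma abs_mul_gauss_le (hv : 0 < v) (μ x : ℝ) :
    |μ * gauss μ v x| ≤ (√(2 * π * v))⁻¹ * (|x| + √(2 * v)) := by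
  have htail : |μ - x| * gauss μ v x ≤ (√(2 * π * v))⁻¹ * √(2 * v) := by
    rw [gauss, mul_left_comm, ← neg_sub μ x, neg_sq]
    exact mul_le_mul_of_nonneg_left (abs_mul_exp_neg_sq_div_le hv (μ - x)) (by positivity)
  rw [abs_mul, abs_of_nonneg (gauss_nonneg μ v x)]
  calc |μ| * gauss μ v x ≤ (|x| + |μ - x|) * gauss μ v x := by
        gcongr
        · exact gauss_nonneg μ v x
        · linarith [abs_sub_abs_le_abs_sub μ x]
    _ = |x| * gauss μ v x + |μ - x| * gauss μ v x := add_mul ..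
    _ ≤ |x| * (√(2 * π * v))⁻¹ + (√(2 * π * v))⁻¹ * √(2 * v) := by
        gcongr
        exact gauss_le hv.le μ x
    _ = _ := by ring

end Gauss

theorem integral_nonneg_of_add_reflect_nonneg {G : Type*} [MeasurableSpace G] [AddGroup G]
    [MeasurableAdd G] [MeasurableNeg G] {μ : Measure G} [μ.IsNegInvariant] [μ.IsAddLeftInvariant]
    {h : G → ℝ} (hh : Integrable h μ) (c : G) (hc : ∀ x, 0 ≤ h x + h (c - x)) :
    0 ≤ ∫ x, h x ∂μ := by
  have hsum := integral_nonneg (μ := μ) (f := fun x => h x + h (c - x)) hc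
  rw [integral_add hh (hh.comp_sub_left c), integral_sub_left_eq_self] at hsum
  linarith

theorem integral_mul_pos_of_pos {α : Type*} [MeasurableSpace α] {μ : Measure α}
    {g f : α → ℝ} (hg : ∀ x, 0 < g x) (hf : 0 ≤ f) (hf_int : Integrable f μ)
    (hgf_int : Integrable (fun x => g x * f x) μ) (hf_pos : 0 < ∫ x, f x ∂μ) :
    0 < ∫ x, g x * f x ∂μ := by
  have hsupp : Function.support (fun x => g x * f x) = Function.support f := by
    ext x
    simp [(hg x).ne']
  rw [integral_pos_iff_support_of_nonneg (fun x => mul_nonneg (hg x).le (hf x)) hgf_int, hsupp]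
  rwa [← integral_pos_iff_support_of_nonneg hf hf_int]

lemma AntitoneOn.apply_le_apply_of_abs_le {f : ℝ → ℝ} (hf : AntitoneOn f (Set.Ici 0))
    (hf_symm : ∀ b, f (-b) = f b) {a b : ℝ} (hab : |a| ≤ |b|) : f b ≤ f a := by
  have hf_abs : ∀ x, f |x| = f x := fun x => by
    rcases abs_choice x with h | h <;> rw [h]
    exact hf_symm x
  rw [← hf_abs a, ← hf_abs b]
  exact hf (abs_nonneg a) (abs_nonneg b) hab

section PosteriorMean

variable {f : ℝ → ℝ} {v : ℝ}

lemma integrable_gauss_mul (hv : 0 ≤ v) (hf : Integrable f) (y : ℝ) :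
    Integrable fun b => gauss b v y * f b :=
  hf.bdd_mul (continuous_gauss_mean v y).aestronglyMeasurable <| ae_of_all _ fun b => by
    rw [norm_of_nonneg (gauss_nonneg b v y)]
    exact gauss_le hv b y

lemma integrable_mul_gauss_mul (hv : 0 < v) (hf : Integrable f) (y : ℝ) :
    Integrable fun b => b * (gauss b v y * f b) := by
  simpa only [Pi.mul_apply, id_eq, mul_assoc] using hf.bdd_mul
    (continuous_id.mul (continuous_gauss_mean v y)).aestronglyMeasurable
    (ae_of_all _ fun b => abs_mul_gauss_le hv b y)

lemma postMean_neg (hf_symm : ∀ b, f (-b) = f b) (v y : ℝ) :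
    postMean f v (-y) = -postMean f v y := by
  have hnum : ∫ b, b * (gauss b v (-y) * f b) = -∫ b, b * (gauss b v y * f b) := by
    rw [← integral_neg_eq_self, ← integral_neg]
    simp only [gauss_neg_neg, hf_symm, neg_mul]
  have hden : ∫ b, gauss b v (-y) * f b = ∫ b, gauss b v y * f b := by
    rw [← integral_neg_eq_self]
    simp only [gauss_neg_neg, hf_symm]
  rw [postMean, postMean, hnum, hden, neg_div]

lemma sub_mul_sub_two_mul_sub_nonneg (hf : AntitoneOn f (Set.Ici 0))
    (hf_symm : ∀ b, f (-b) = f b) {y : ℝ} (hy : 0 ≤ y) (b : ℝ) :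
    0 ≤ (y - b) * (f b - f (2 * y - b)) := by
  rcases le_total b y with hb | hb
  · have : f (2 * y - b) ≤ f b :=
      hf.apply_le_apply_of_abs_le hf_symm (abs_le_abs (by linarith) (by linarith))
    exact mul_nonneg (by linarith) (by linarith)
  · have : f b ≤ f (2 * y - b) :=
      hf.apply_le_apply_of_abs_le hf_symm (abs_le_abs (by linarith) (by linarith))
    exact mul_nonneg_of_nonpos_of_nonpos (by linarith) (by linarith)

lemma postMean_le_self (hv : 0 < v) (hf_nonneg : 0 ≤ f) (hf_int : Integrable f)
    (hf_pos : 0 < ∫ b, f b) (hf : AntitoneOn f (Set.Ici 0)) (hf_symm : ∀ b, f (-b) = f b)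
    {y : ℝ} (hy : 0 ≤ y) : postMean f v y ≤ y := by
  have hden_int := integrable_gauss_mul hv.le hf_int y
  have hnum_int := integrable_mul_gauss_mul hv hf_int y
  have hres_int : Integrable fun b => (y - b) * (gauss b v y * f b) := by
    simp only [sub_mul]
    exact (hden_int.const_mul y).sub hnum_int
  have hres_nonneg : 0 ≤ ∫ b, (y - b) * (gauss b v y * f b) := by
    refine integral_nonneg_of_add_reflect_nonneg hres_int (2 * y) fun b => ?_
    calc 0 ≤ (y - b) * (f b - f (2 * y - b)) * gauss b v y :=
          mul_nonneg (sub_mul_sub_two_mul_sub_nonneg hf hf_symm hy b) (gauss_pos hv b y).le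
      _ = _ := by rw [gauss_two_mul_sub]; ring
  have hres_eq : ∫ b, (y - b) * (gauss b v y * f b)
      = y * (∫ b, gauss b v y * f b) - ∫ b, b * (gauss b v y * f b) := by
    simp only [sub_mul]
    rw [integral_sub (hden_int.const_mul y) hnum_int, integral_const_mul]
  have hden_pos := integral_mul_pos_of_pos (gauss_pos hv · y) hf_nonneg hf_int hden_int hf_pos
  rw [postMean, div_le_iff₀ hden_pos]
  linarith

end PosteriorMean

/-- If `f` is a symmetric unimodal probability density with mode
at zero and `σ² > 0`, then the normal means posterior mean operator
`S(y) = E[b | y]` is an odd function of `y` that satisfies `S(y) ≤ y` for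
`y > 0`. -/
theorem stmt_3 (σ2 : ℝ) (hσ2 : 0 < σ2) (f : ℝ → ℝ)
    (hf_nonneg : ∀ b, 0 ≤ f b) (hf_int : ∫ b : ℝ, f b = 1)
    (hf_symm : ∀ b, f (-b) = f b)
    (hf_unimodal : AntitoneOn f (Set.Ici 0)) :
    (∀ y : ℝ, postMean f σ2 (-y) = -postMean f σ2 y) ∧
    (∀ y : ℝ, 0 < y → postMean f σ2 y ≤ y) := by
  have hf_pos : 0 < ∫ b, f b := hf_int ▸ one_pos
  have hf_integrable : Integrable f := .of_integral_ne_zero hf_pos.ne'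
  exact ⟨postMean_neg hf_symm σ2, fun y hy =>
    postMean_le_self hσ2 hf_nonneg hf_integrable hf_pos hf_unimodal hf_symm hy.le⟩
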